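/- For every λ ∈ X⁺ and every k ≥ 1: E^k_λ = E¹_{λ⁰} · F(E¹_{λ¹}) · F²(E¹_{λ²}) ⋯ F^{k−1}(E¹_{λ^{k−1}}) · F^k(E⁰_{∑_{j≥k} p^{j−k} λ^j}). -/

import Mathlib

/-!
Setting: `X⁺ = I → ℕ` (componentwise addition) for a finite index set `I`, `p ≥ 2`.
`digit p lam k` is the `k`-th base-`p` digit `λ^k` of `lam` (so `λ^k ∈ X⁺_red` and
`lam = ∑_k p^k • λ^k`); `shift p k lam = ∑_{j≥k} p^{j-k} λ^j`;
`trunc p k lam = ∑_{0≤j≤k-1} p^j λ^j`.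
-/

namespace LusztigChar

variable {I : Type*} [Fintype I] {R : Type*} [CommRing R]

/-- The `k`-th digit `λ^k` of `λ ∈ X⁺ = I → ℕ` in base `p`. -/
def digit (p : ℕ) (lam : I → ℕ) (k : ℕ) : I → ℕ := fun i => lam i / p ^ k % p

/-- `∑_{j≥k} p^{j-k} λ^j ∈ X⁺` (a sum with finitely many nonzero terms). -/
noncomputable def shift (p k : ℕ) (lam : I → ℕ) : I → ℕ :=
  ∑ᶠ j : ℕ, p ^ j • digit p lam (k + j)

/-- `∑_{0≤j≤k-1} p^j λ^j ∈ X⁺`. -/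
def trunc (p k : ℕ) (lam : I → ℕ) : I → ℕ :=
  ∑ j ∈ Finset.range k, p ^ j • digit p lam j

/-- The recursive family `E^k : X⁺ → R` built from `E⁰ = E0` and the integers
`p_{μ,λ} = P μ λ`:  `E^k_λ = ∑_μ p_{μ, ∑_{j≥k-1} p^{j-k+1} λ^j} · E^{k-1}_{∑_{0≤j≤k-2} p^j λ^j + p^{k-1} μ}`
for `k ≥ 1`. -/
noncomputable def E (p : ℕ) (P : (I → ℕ) → (I → ℕ) → ℤ) (E0 : (I → ℕ) → R) :
    ℕ → (I → ℕ) → R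
  | 0 => E0
  | k + 1 => fun lam =>
      ∑ᶠ mu : I → ℕ, P mu (shift p k lam) • E p P E0 k (trunc p k lam + p ^ k • mu)

/-! By induction on `k`. Since `p_{μ,ν} ≠ 0` forces `N μ ≤ N ν`, the sum defining `E^{k+1}_λ` is
finite. By the induction hypothesis each summand `E^k_{∑_{j<k} p^j λ^j + p^k μ}` is the product of
the first `k` factors (whose digits do not see `μ`) with `F^k(E⁰_μ)`, so the sum is that product
times `F^k(E¹_{∑_{j≥k} p^{j-k} λ^j})`, and the Steinberg identity splits off the next factor. -/

lemma sum_range_pow_mul_div_pow_mod (p m : ℕ) :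
    ∀ n, ∑ j ∈ Finset.range n, p ^ j * (m / p ^ j % p) = m % p ^ n
  | 0 => by simp [Nat.mod_one]
  | n + 1 => by
    rw [Finset.sum_range_succ, sum_range_pow_mul_div_pow_mod p m n, pow_succ, Nat.mod_mul]

lemma add_pow_mul_div_pow_mod {p h k : ℕ} (hp : 0 < p) (hhk : h < k) (r b : ℕ) :
    (r + p ^ k * b) / p ^ h % p = r / p ^ h % p := by
  obtain ⟨d, rfl⟩ : ∃ d, k = h + d + 1 := ⟨k - h - 1, by omega⟩
  have hkeq : p ^ (h + d + 1) * b = p ^ h * (p * (p ^ d * b)) := by ring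
  rw [hkeq, Nat.add_mul_div_left _ _ (pow_pos hp h), Nat.add_mul_mod_self_left]

omit [Fintype I] in
lemma trunc_apply (p k : ℕ) (lam : I → ℕ) (i : I) : trunc p k lam i = lam i % p ^ k := by
  simp only [trunc, Finset.sum_apply, Pi.smul_apply, smul_eq_mul, digit]
  exact sum_range_pow_mul_div_pow_mod p (lam i) k

omit [Fintype I] in
lemma digit_eq_zero_of_lt {p k : ℕ} {lam : I → ℕ} (h : ∀ i, lam i < p ^ k) :
    digit p lam k = 0 :=
  funext fun i => by simp [digit, Nat.div_eq_of_lt (h i)]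

lemma shift_apply {p : ℕ} (hp : 2 ≤ p) (k : ℕ) (lam : I → ℕ) (i : I) :
    shift p k lam i = lam i / p ^ k := by
  set S := ∑ i, lam i
  have hlam_le : ∀ i, lam i ≤ S := fun i =>
    Finset.single_le_sum (fun _ _ => Nat.zero_le _) (Finset.mem_univ i)
  have hS : S < p ^ S := Nat.lt_pow_self hp
  have hsupp : Function.support (fun j => p ^ j • digit p lam (k + j)) ⊆ Finset.range S := by
    intro j hj
    by_contra hjS
    refine hj ?_
    change p ^ j • digit p lam (k + j) = 0
    rw [digit_eq_zero_of_lt, smul_zero]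
    intro i'
    calc lam i' ≤ S := hlam_le i'
      _ < p ^ S := hS
      _ ≤ p ^ (k + j) := Nat.pow_le_pow_right (by omega) (by simp at hjS; omega)
  rw [shift, finsum_eq_sum_of_support_subset _ hsupp, Finset.sum_apply]
  simp only [Pi.smul_apply, smul_eq_mul, digit, pow_add, ← Nat.div_div_eq_div_mul]
  rw [sum_range_pow_mul_div_pow_mod, Nat.mod_eq_of_lt]
  exact (Nat.div_le_self _ _).trans_lt ((hlam_le i).trans_lt hS)

omit [Fintype I] in
lemma digit_trunc_add {p : ℕ} (hp : 0 < p) {h k : ℕ} (hhk : h < k) (lam mu : I → ℕ) :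
    digit p (trunc p k lam + p ^ k • mu) h = digit p lam h := by
  funext i
  change (trunc p k lam i + p ^ k * mu i) / p ^ h % p = lam i / p ^ h % p
  conv_rhs => rw [← Nat.mod_add_div (lam i) (p ^ k)]
  rw [trunc_apply, add_pow_mul_div_pow_mod hp hhk, add_pow_mul_div_pow_mod hp hhk]

lemma shift_trunc_add {p : ℕ} (hp : 2 ≤ p) (k : ℕ) (lam mu : I → ℕ) :
    shift p k (trunc p k lam + p ^ k • mu) = mu := by
  funext i
  have hpk : 0 < p ^ k := pow_pos (by omega) k
  simp only [shift_apply hp, Pi.add_apply, Pi.smul_apply, smul_eq_mul, trunc_apply]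
  rw [Nat.add_mul_div_left _ _ hpk, Nat.div_eq_of_lt (Nat.mod_lt _ hpk), zero_add]

lemma digit_shift_zero {p : ℕ} (hp : 2 ≤ p) (k : ℕ) (lam : I → ℕ) :
    digit p (shift p k lam) 0 = digit p lam k :=
  funext fun i => by simp [digit, shift_apply hp]

lemma shift_one_shift {p : ℕ} (hp : 2 ≤ p) (k : ℕ) (lam : I → ℕ) :
    shift p 1 (shift p k lam) = shift p (k + 1) lam :=
  funext fun i => by rw [shift_apply hp, shift_apply hp, shift_apply hp, pow_one,
    Nat.div_div_eq_div_mul, pow_succ]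

lemma E_one_apply {p : ℕ} (hp : 2 ≤ p) (P : (I → ℕ) → (I → ℕ) → ℤ) (E0 : (I → ℕ) → R)
    (nu : I → ℕ) : E p P E0 1 nu = ∑ᶠ mu : I → ℕ, P mu nu • E0 mu := by
  have hshift : shift p 0 nu = nu := funext fun i => by simp [shift_apply hp]
  simp [E, hshift, trunc]

lemma apply_le_of_map_eq_zero (N : (I → ℕ) →+ ℕ) (hN : ∀ a, N a = 0 → a = 0)
    (mu : I → ℕ) (i : I) : mu i ≤ N mu := by
  classical
  have hsingle : 1 ≤ N (Pi.single i 1) := Nat.one_le_iff_ne_zero.mpr fun h => by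
    simpa using congrFun (hN _ h) i
  calc mu i ≤ mu i * N (Pi.single i 1) := Nat.le_mul_of_pos_right _ hsingle
    _ = N (Pi.single i (mu i)) := by
        rw [← smul_eq_mul, ← map_nsmul, ← Pi.single_smul', smul_eq_mul, mul_one]
    _ ≤ ∑ j, N (Pi.single j (mu j)) :=
        Finset.single_le_sum (f := fun j => N (Pi.single j (mu j)))
          (fun _ _ => Nat.zero_le _) (Finset.mem_univ i)
    _ = N mu := by rw [← map_sum, Finset.univ_sum_single]

lemma finite_setOf_map_le (N : (I → ℕ) →+ ℕ) (hN : ∀ a, N a = 0 → a = 0) (n : ℕ) :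
    {mu : I → ℕ | N mu ≤ n}.Finite :=
  (Set.Finite.pi' fun _ => Set.finite_Iic n).subset fun mu hmu i =>
    (apply_le_of_map_eq_zero N hN mu i).trans hmu

lemma finsum_zsmul_mul_map {α S : Type*} [CommRing S] (G : R →+* S) (C : S) {c : α → ℤ}
    (hc : (Function.support c).Finite) (f : α → R) :
    ∑ᶠ a, c a • (C * G (f a)) = C * G (∑ᶠ a, c a • f a) := by
  have hsupp_f : Function.support (fun a => c a • f a) ⊆ hc.toFinset := by
    simpa using Function.support_smul_subset_left c f
  have hsupp_Gf : Function.support (fun a => c a • (C * G (f a))) ⊆ hc.toFinset := by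
    simpa using Function.support_smul_subset_left c fun a => C * G (f a)
  rw [finsum_eq_sum_of_support_subset _ hsupp_Gf, finsum_eq_sum_of_support_subset _ hsupp_f,
    map_sum, Finset.mul_sum]
  exact Finset.sum_congr rfl fun a _ => by rw [map_zsmul, mul_smul_comm]

theorem E_eq_prod_iterate_general {I : Type*} [Fintype I] {R : Type*} [CommRing R]
    (p : ℕ) (hp : 2 ≤ p)
    (le : (I → ℕ) → (I → ℕ) → Prop)
    (N : (I → ℕ) →+ ℕ)
    (hN_zero : ∀ a, N a = 0 → a = 0)
    (hN_mono : ∀ a b, le a b → N a ≤ N b)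
    (P : (I → ℕ) → (I → ℕ) → ℤ)
    (hP_le : ∀ mu lam, P mu lam ≠ 0 → le mu lam)
    (E0 : (I → ℕ) → R)
    (F : R →+* R)
    (hSteinberg : ∀ lam : I → ℕ,
      E p P E0 1 lam = E p P E0 1 (digit p lam 0) * F (E0 (shift p 1 lam)))
    (k : ℕ) (hk : 1 ≤ k) (lam : I → ℕ) :
    E p P E0 k lam =
      (∏ h ∈ Finset.range k, (⇑F)^[h] (E p P E0 1 (digit p lam h))) *
        (⇑F)^[k] (E0 (shift p k lam)) := by
  induction k, hk using Nat.le_induction generalizing lam with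
  | base => simpa using hSteinberg lam
  | succ k hk ih =>
    set s := shift p k lam
    set C := ∏ h ∈ Finset.range k, (⇑F)^[h] (E p P E0 1 (digit p lam h))
    have hfin : (Function.support fun mu => P mu s).Finite :=
      (finite_setOf_map_le N hN_zero (N s)).subset fun mu hmu => hN_mono _ _ (hP_le mu s hmu)
    have hterm (mu : I → ℕ) : E p P E0 k (trunc p k lam + p ^ k • mu) = C * (⇑F)^[k] (E0 mu) := by
      rw [ih, shift_trunc_add hp]
      exact congrArg (· * _) (Finset.prod_congr rfl fun h hh => by
        rw [digit_trunc_add (by omega) (Finset.mem_range.mp hh)])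
    calc E p P E0 (k + 1) lam = ∑ᶠ mu, P mu s • (C * (F ^ k) (E0 mu)) := by
          simp only [E, hterm, RingHom.coe_pow]; rfl
      _ = C * (F ^ k) (E p P E0 1 s) := by rw [finsum_zsmul_mul_map _ _ hfin, E_one_apply hp]
      _ = _ := by
          rw [hSteinberg, map_mul, digit_shift_zero hp, shift_one_shift hp, RingHom.coe_pow,
            ← Function.iterate_succ_apply, Finset.prod_range_succ, mul_assoc]

/-- paper 6(b): assuming the Steinberg-type identity
`E¹_λ = E¹_{λ⁰} · F(E⁰_{∑_{j≥1} p^{j-1} λ^j})`, for every `λ ∈ X⁺` and `k ≥ 1` one has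
`E^k_λ = E¹_{λ⁰} · F(E¹_{λ¹}) ⋯ F^{k-1}(E¹_{λ^{k-1}}) · F^k(E⁰_{∑_{j≥k} p^{j-k} λ^j})`. -/
theorem E_eq_prod_iterate {I : Type*} [Fintype I] {R : Type*} [CommRing R]
    (p : ℕ) (hp : 2 ≤ p)
    (le : (I → ℕ) → (I → ℕ) → Prop)
    (hle_refl : ∀ a, le a a)
    (hle_antisymm : ∀ a b, le a b → le b a → a = b)
    (hle_trans : ∀ a b c, le a b → le b c → le a c)
    (N : (I → ℕ) →+ ℕ)
    (hN_zero : ∀ a, N a = 0 → a = 0)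
    (hN_mono : ∀ a b, le a b → N a ≤ N b)
    (P : (I → ℕ) → (I → ℕ) → ℤ)
    (hP_le : ∀ mu lam, P mu lam ≠ 0 → le mu lam)
    (hP_diag : ∀ lam, P lam lam = 1)
    (E0 : (I → ℕ) → R)
    (F : R →+* R)
    (hSteinberg : ∀ lam : I → ℕ,
      E p P E0 1 lam = E p P E0 1 (digit p lam 0) * F (E0 (shift p 1 lam)))
    (k : ℕ) (hk : 1 ≤ k) (lam : I → ℕ) :
    E p P E0 k lam =
      (∏ h ∈ Finset.range k, (⇑F)^[h] (E p P E0 1 (digit p lam h))) *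
        (⇑F)^[k] (E0 (shift p k lam)) :=
  E_eq_prod_iterate_general p hp le N hN_zero hN_mono P hP_le E0 F hSteinberg k hk lam

end LusztigChar
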